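/- Marginalisation is the most specific signature forgetting operator: if ∘ is any operator mapping an OCF κ over Σ and P ⊆ Σ to an OCF κ∘P over Σ\P satisfying DFP-ES-1 (Bel(κ) ⊨ Bel(κ∘P)) and DFP-ES-6 (Bel(κ∘P) = Bel((κ∘P)↑Σ) ∩ L_{Σ\P}), then Bel(κ|_{Σ\P}) ⊨ Bel(κ∘P). -/
import Mathlib


/-- Propositional formulas over atoms `ℕ`. -/
inductive Fm where
  | var : ℕ → Fm
  | top : Fm
  | bot : Fm
  | neg : Fm → Fm
  | conj : Fm → Fm → Fm
  | disj : Fm → Fm → Fm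

/-- Evaluation of a formula under a total valuation. -/
def Fm.eval (v : ℕ → Bool) : Fm → Bool
  | var n => v n
  | top => true
  | bot => false
  | neg φ => !(φ.eval v)
  | conj φ ψ => φ.eval v && ψ.eval v
  | disj φ ψ => φ.eval v || ψ.eval v

/-- The atoms mentioned in a formula. -/
def Fm.atoms : Fm → Set ℕ
  | var n => {n}
  | top => ∅
  | bot => ∅
  | neg φ => φ.atoms
  | conj φ ψ => φ.atoms ∪ ψ.atoms
  | disj φ ψ => φ.atoms ∪ ψ.atoms

/-- The language `L_S` over signature `S`: formulas mentioning only atoms in `S`. -/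
def Lang (S : Set ℕ) : Set Fm := {φ | φ.atoms ⊆ S}

/-- Interpretations `Ω_S` over signature `S`. -/
def Itp (S : Set ℕ) := ↥S → Bool

open Classical in
/-- Extend an interpretation over `S` to a total valuation (false outside `S`). -/
noncomputable def Itp.toVal {S : Set ℕ} (ω : Itp S) : ℕ → Bool :=
  fun n => if h : n ∈ S then ω ⟨n, h⟩ else false

/-- Satisfaction of a formula by an interpretation over `S`. -/
def Itp.sat {S : Set ℕ} (ω : Itp S) (φ : Fm) : Prop := φ.eval ω.toVal = true

/-- Restriction of an interpretation over `S` to a subsignature `S'`. -/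
def Itp.restrict {S' S : Set ℕ} (h : S' ⊆ S) (ω : Itp S) : Itp S' :=
  fun n => ω ⟨n.1, h n.2⟩

/-- Models over `S` of a set of formulas. -/
def Models (S : Set ℕ) (Γ : Set Fm) : Set (Itp S) := {ω | ∀ φ ∈ Γ, ω.sat φ}

/-- Semantic entailment over `S` between sets of formulas. -/
def Entails (S : Set ℕ) (Γ Δ : Set Fm) : Prop := Models S Γ ⊆ Models S Δ

/-- Consequence operator `Cn_S`. -/
def Cn (S : Set ℕ) (Γ : Set Fm) : Set Fm :=
  {φ | φ ∈ Lang S ∧ ∀ ω ∈ Models S Γ, ω.sat φ}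

/-- Delgrande forgetting `F(Γ,P) = Cn_S(Γ) ∩ L_{S\P}`. -/
def Forget (S : Set ℕ) (Γ : Set Fm) (P : Set ℕ) : Set Fm :=
  Cn S Γ ∩ Lang (S \ P)

/-- Reduction of a set of models to a subsignature. -/
def reduce {S' S : Set ℕ} (h : S' ⊆ S) (M : Set (Itp S)) : Set (Itp S') :=
  {ω' | ∃ ω ∈ M, ω.restrict h = ω'}

/-- Expansion of a set of models to a supersignature. -/
def expand {S' S : Set ℕ} (h : S' ⊆ S) (M' : Set (Itp S')) : Set (Itp S) :=
  {ω | ω.restrict h ∈ M'}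

/-- An OCF over `S` is a ranking function attaining rank 0. -/
def IsOCF {S : Set ℕ} (κ : Itp S → ℕ) : Prop := ∃ ω, κ ω = 0

/-- The models (rank-0 interpretations) of an OCF. -/
def OCFMod {S : Set ℕ} (κ : Itp S → ℕ) : Set (Itp S) := {ω | κ ω = 0}

/-- The belief set of an OCF over `S`. -/
def Bel (S : Set ℕ) (κ : Itp S → ℕ) : Set Fm :=
  {φ | φ ∈ Lang S ∧ ∀ ω ∈ OCFMod κ, ω.sat φ}

/-- Marginalisation of an OCF to a subsignature. -/
noncomputable def marg {S' S : Set ℕ} (h : S' ⊆ S) (κ : Itp S → ℕ) : Itp S' → ℕ :=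
  fun ω' => sInf {n | ∃ ω : Itp S, ω.restrict h = ω' ∧ κ ω = n}

/-- Lifting of an OCF over `S'` to a supersignature `S`. -/
def lift {S' S : Set ℕ} (h : S' ⊆ S) (κ' : Itp S' → ℕ) : Itp S → ℕ :=
  fun ω => κ' (ω.restrict h)

/-- Substitution of the atom `ρ` by formula `χ`. -/
def Fm.subst (ρ : ℕ) (χ : Fm) : Fm → Fm
  | var n => if n = ρ then χ else var n
  | top => top
  | bot => bot
  | neg φ => neg (subst ρ χ φ)
  | conj φ ψ => conj (subst ρ χ φ) (subst ρ χ ψ)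
  | disj φ ψ => disj (subst ρ χ φ) (subst ρ χ ψ)

/-- Boole's atom forgetting: `forget(φ,ρ) = φ[ρ/⊤] ∨ φ[ρ/⊥]`. -/
def boole (φ : Fm) (ρ : ℕ) : Fm := .disj (φ.subst ρ .top) (φ.subst ρ .bot)

lemma eval_congr (φ : Fm) : ∀ v w : ℕ → Bool, (∀ n ∈ φ.atoms, v n = w n) →
    φ.eval v = φ.eval w := by
  induction φ with
  | var n => intro v w h; exact h n rfl
  | top => intros; rfl
  | bot => intros; rfl
  | neg φ ih => intro v w h; simp [Fm.eval, ih v w h]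
  | conj φ ψ ih₁ ih₂ =>
      intro v w h
      simp [Fm.eval, ih₁ v w (fun n hn => h n (Or.inl hn)),
        ih₂ v w (fun n hn => h n (Or.inr hn))]
  | disj φ ψ ih₁ ih₂ =>
      intro v w h
      simp [Fm.eval, ih₁ v w (fun n hn => h n (Or.inl hn)),
        ih₂ v w (fun n hn => h n (Or.inr hn))]

lemma sat_restrict {S' S : Set ℕ} (h : S' ⊆ S) (ω : Itp S) (φ : Fm)
    (hφ : φ ∈ Lang S') : (ω.restrict h).sat φ ↔ ω.sat φ := by
  unfold Itp.sat
  have : φ.eval (ω.restrict h).toVal = φ.eval ω.toVal := by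
    apply eval_congr
    intro n hn
    have hn' : n ∈ S' := hφ hn
    simp [Itp.toVal, Itp.restrict, hn', h hn']
  rw [this]

theorem stmt18 (S P : Set ℕ) (hS : S.Finite) (hP : P ⊆ S)
    (op : (Itp S → ℕ) → (Itp (S \ P) → ℕ))
    (hopOCF : ∀ κ, IsOCF κ → IsOCF (op κ))
    -- (DFP-ES-1): the prior beliefs entail the posterior beliefs
    (hES1 : ∀ κ : Itp S → ℕ, IsOCF κ →
      Entails S (Bel S κ) (Bel (S \ P) (op κ)))
    -- (DFP-ES-6): the posterior beliefs equal the beliefs of the lifting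
    -- intersected with the reduced language
    (hES6 : ∀ κ : Itp S → ℕ, IsOCF κ →
      Bel (S \ P) (op κ) = Bel S (lift Set.diff_subset (op κ)) ∩ Lang (S \ P))
    (κ : Itp S → ℕ) (hκ : IsOCF κ) :
    Entails (S \ P) (Bel (S \ P) (marg Set.diff_subset κ)) (Bel (S \ P) (op κ)) := by
  -- It suffices to show Bel (op κ) ⊆ Bel (marg κ)
  have key : Bel (S \ P) (op κ) ⊆ Bel (S \ P) (marg Set.diff_subset κ) := by
    intro φ hφ
    refine ⟨hφ.1, ?_⟩
    intro ω₀ hω₀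
    -- ω₀ has rank 0 under marg, so some extension ω has κ ω = 0
    have hne : {n | ∃ ω : Itp S, ω.restrict Set.diff_subset = ω₀ ∧ κ ω = n}.Nonempty := by
      classical
      refine ⟨κ (fun n => if h' : n.1 ∈ S \ P then ω₀ ⟨n.1, h'⟩ else false),
        (fun n => if h' : n.1 ∈ S \ P then ω₀ ⟨n.1, h'⟩ else false), ?_, rfl⟩
      funext m
      simp [Itp.restrict, m.2]
    have hmem := Nat.sInf_mem hne
    rw [show sInf {n | ∃ ω : Itp S, ω.restrict Set.diff_subset = ω₀ ∧ κ ω = n}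
        = marg Set.diff_subset κ ω₀ from rfl, hω₀] at hmem
    obtain ⟨ω, hres, hκ0⟩ := hmem
    -- ω is a model of Bel S κ
    have hωBel : ω ∈ Models S (Bel S κ) := fun ψ hψ => hψ.2 ω hκ0
    have hωpost : ω ∈ Models S (Bel (S \ P) (op κ)) := hES1 κ hκ hωBel
    have := hωpost φ hφ
    have := (sat_restrict Set.diff_subset ω φ hφ.1).2 this
    rwa [hres] at this
  intro ω' hω' φ hφ
  exact hω' φ (key hφ)
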